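/- For each T with 0 < T < τ₁, there exists a unique Y ≥ 0 such that 1 = U₁ ∫_ε^{ħω_D} (1/√(ξ² + Y)) tanh(√(ξ² + Y)/(2T)) dξ; moreover Y > 0. -/

import Mathlib

/-!
Put `g_T(s) = tanh (s / 2T) / s` and `F(Y) = ∫_ε^ω g_T(√(ξ² + Y)) dξ`. Since `tanh x / x` is
strictly decreasing on `(0, ∞)`, so is `g_T`, hence `F` is continuous and strictly decreasing on
`[0, ∞)`. As `tanh` is increasing, `g_{τ₁} < g_T` for `T < τ₁`, so `U₁ F(0) > 1`; and
`g_T(s) ≤ 1 / s` makes `U₁ F(Y) < 1` for large `Y`. The intermediate value theorem gives the unique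
root, which is positive because `U₁ F(0) ≠ 1`.
-/

open Real Set intervalIntegral

namespace Real

theorem hasDerivAt_tanh (x : ℝ) : HasDerivAt tanh (1 / cosh x ^ 2) x := by
  have h : HasDerivAt (fun y => sinh y / cosh y)
      ((cosh x * cosh x - sinh x * sinh x) / cosh x ^ 2) x :=
    (hasDerivAt_sinh x).div (hasDerivAt_cosh x) (cosh_pos x).ne'
  rw [← funext tanh_eq_sinh_div_cosh] at h
  convert h using 2
  rw [← cosh_sq_sub_sinh_sq x]
  ring

@[fun_prop]
theorem continuous_tanh : Continuous tanh :=
  continuous_iff_continuousAt.2 fun x => (hasDerivAt_tanh x).continuousAt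

theorem strictMono_tanh : StrictMono tanh :=
  strictMono_of_deriv_pos fun x => by rw [(hasDerivAt_tanh x).deriv]; positivity

theorem strictAntiOn_tanh_div_self : StrictAntiOn (fun x => tanh x / x) (Ioi 0) := by
  refine strictAntiOn_of_deriv_neg (convex_Ioi 0)
    (continuous_tanh.continuousOn.div continuousOn_id fun x hx => (ne_of_gt hx)) fun x hx => ?_
  rw [interior_Ioi] at hx
  have hx : 0 < x := hx
  have hd : HasDerivAt (fun y => tanh y / y) ((1 / cosh x ^ 2 * x - tanh x * 1) / x ^ 2) x :=
    (hasDerivAt_tanh x).div (hasDerivAt_id' x) hx.ne'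
  rw [hd.deriv]
  -- the numerator `x / cosh x ^ 2 - tanh x` is negative iff `2 * x < sinh (2 * x)`
  have hsinh : x < sinh x * cosh x := by
    have := self_lt_sinh_iff.2 (by positivity : 0 < 2 * x)
    rw [sinh_two_mul] at this
    linarith
  have hc := cosh_pos x
  rw [tanh_eq_sinh_div_cosh]
  apply div_neg_of_neg_of_pos _ (by positivity)
  rw [sub_neg, mul_one, div_mul_eq_mul_div, one_mul, div_lt_div_iff₀ (by positivity) hc]
  nlinarith

end Real

section SqrtSqAdd

variable {φ : ℝ → ℝ} {ε ω : ℝ}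

theorem le_sqrt_sq_add {ξ Y : ℝ} (hε : 0 ≤ ε) (hξ : ε ≤ ξ) (hY : 0 ≤ Y) : ε ≤ √(ξ ^ 2 + Y) :=
  le_sqrt_of_sq_le (by nlinarith)

theorem continuousOn_comp_sqrt_sq_add (hε : 0 ≤ ε) (hφ : ContinuousOn φ (Ici ε)) {Y : ℝ}
    (hY : 0 ≤ Y) : ContinuousOn (fun ξ => φ √(ξ ^ 2 + Y)) (Icc ε ω) :=
  hφ.comp (by fun_prop) fun _ hξ => le_sqrt_sq_add hε hξ.1 hY

theorem continuousOn_integral_comp_sqrt_sq_add (hε : 0 ≤ ε) (hεω : ε ≤ ω)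
    (hφ : ContinuousOn φ (Ici ε)) :
    ContinuousOn (fun Y => ∫ ξ in ε..ω, φ √(ξ ^ 2 + Y)) (Ici 0) := by
  -- `max ε` leaves the integrand unchanged on `Ici 0 × [ε, ω]` and makes it continuous everywhere
  have hcont : Continuous (Function.uncurry fun Y ξ => φ (max ε √(ξ ^ 2 + Y))) :=
    hφ.comp_continuous (by fun_prop) fun _ => mem_Ici.2 (le_max_left _ _)
  refine (continuous_parametric_intervalIntegral_of_continuous' hcont ε ω).continuousOn.congr
    fun Y hY => integral_congr fun ξ hξ => ?_
  rw [uIcc_of_le hεω] at hξ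
  simp only [max_eq_right (le_sqrt_sq_add hε hξ.1 hY)]

theorem strictAntiOn_integral_comp_sqrt_sq_add (hε : 0 ≤ ε) (hεω : ε < ω)
    (hφ : ContinuousOn φ (Ici ε)) (hφ' : StrictAntiOn φ (Ici ε)) :
    StrictAntiOn (fun Y => ∫ ξ in ε..ω, φ √(ξ ^ 2 + Y)) (Ici 0) := by
  intro Y₁ hY₁ Y₂ hY₂ hY
  have hlt : ∀ ξ ∈ Icc ε ω, φ √(ξ ^ 2 + Y₂) < φ √(ξ ^ 2 + Y₁) := fun ξ hξ =>
    hφ' (le_sqrt_sq_add hε hξ.1 hY₁) (le_sqrt_sq_add hε hξ.1 hY₂)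
      (sqrt_lt_sqrt (by nlinarith [hξ.1, mem_Ici.1 hY₁]) (by linarith))
  exact integral_lt_integral_of_continuousOn_of_le_of_exists_lt hεω
    (continuousOn_comp_sqrt_sq_add hε hφ hY₂) (continuousOn_comp_sqrt_sq_add hε hφ hY₁)
    (fun ξ hξ => (hlt ξ (Ioc_subset_Icc_self hξ)).le)
    ⟨ε, left_mem_Icc.2 hεω.le, hlt ε (left_mem_Icc.2 hεω.le)⟩

end SqrtSqAdd

/-- Chosen so that the integrands in the statement are literally `gapKernel T √(ξ ^ 2 + Y)` and
`gapKernel τ₁ ξ`. -/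
noncomputable def gapKernel (T s : ℝ) : ℝ := 1 / s * tanh (s / (2 * T))

section gapKernel

variable {T s : ℝ}

theorem continuousOn_gapKernel : ContinuousOn (gapKernel T) (Ioi 0) :=
  (continuousOn_const.div continuousOn_id fun s hs => ne_of_gt hs).mul
    (by fun_prop : Continuous fun s => tanh (s / (2 * T))).continuousOn

theorem strictAntiOn_gapKernel (hT : 0 < T) : StrictAntiOn (gapKernel T) (Ioi 0) := by
  intro a ha b hb hab
  have h2T : 0 < 2 * T := by positivity
  have := strictAntiOn_tanh_div_self (div_pos ha h2T) (div_pos hb h2T)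
    (div_lt_div_of_pos_right hab h2T)
  simp only [div_div_eq_mul_div, mul_div_right_comm _ (2 * T)] at this
  simp only [gapKernel, one_div_mul_eq_div]
  exact lt_of_mul_lt_mul_right this h2T.le

theorem gapKernel_lt_gapKernel (hs : 0 < s) {τ : ℝ} (hT : 0 < T) (hTτ : T < τ) :
    gapKernel τ s < gapKernel T s :=
  mul_lt_mul_of_pos_left
    (strictMono_tanh (div_lt_div_of_pos_left hs (by positivity) (by linarith))) (by positivity)

theorem gapKernel_le_one_div (hs : 0 < s) : gapKernel T s ≤ 1 / s :=
  mul_le_of_le_one_right (by positivity) (tanh_lt_one _).le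

end gapKernel

theorem integral_gapKernel_sqrt_sq_add_sq_le {T ε ω c : ℝ} (hε : 0 < ε) (hεω : ε ≤ ω)
    (hc : 0 < c) : ∫ ξ in ε..ω, gapKernel T √(ξ ^ 2 + c ^ 2) ≤ (ω - ε) / c := by
  have hle : ∀ ξ ∈ Icc ε ω, gapKernel T √(ξ ^ 2 + c ^ 2) ≤ 1 / c := fun ξ _ => by
    have hcs : c ≤ √(ξ ^ 2 + c ^ 2) := le_sqrt_of_sq_le (by nlinarith)
    exact (gapKernel_le_one_div (hc.trans_le hcs)).trans (one_div_le_one_div_of_le hc hcs)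
  have hint : IntervalIntegrable (fun ξ => gapKernel T √(ξ ^ 2 + c ^ 2)) MeasureTheory.volume ε ω :=
    (continuousOn_comp_sqrt_sq_add hε.le (continuousOn_gapKernel.mono (Ici_subset_Ioi.2 hε))
      (sq_nonneg c)).intervalIntegrable_of_Icc hεω
  calc ∫ ξ in ε..ω, gapKernel T √(ξ ^ 2 + c ^ 2) ≤ ∫ _ in ε..ω, 1 / c :=
        integral_mono_on hεω hint intervalIntegrable_const hle
    _ = (ω - ε) / c := by rw [integral_const, smul_eq_mul, mul_one_div]

theorem integral_gapKernel_lt_integral_gapKernel {T τ ε ω : ℝ} (hε : 0 < ε) (hεω : ε < ω)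
    (hT : 0 < T) (hTτ : T < τ) : ∫ ξ in ε..ω, gapKernel τ ξ < ∫ ξ in ε..ω, gapKernel T ξ := by
  have hpos : Icc ε ω ⊆ Ioi 0 := fun ξ hξ => hε.trans_le hξ.1
  have hlt : ∀ ξ ∈ Icc ε ω, gapKernel τ ξ < gapKernel T ξ := fun ξ hξ =>
    gapKernel_lt_gapKernel (hpos hξ) hT hTτ
  exact integral_lt_integral_of_continuousOn_of_le_of_exists_lt hεω
    (continuousOn_gapKernel.mono hpos) (continuousOn_gapKernel.mono hpos)
    (fun ξ hξ => (hlt ξ (Ioc_subset_Icc_self hξ)).le)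
    ⟨ε, left_mem_Icc.2 hεω.le, hlt ε (left_mem_Icc.2 hεω.le)⟩

theorem stmt5_general (U₁ ε ω τ₁ : ℝ) (hU : 0 < U₁) (hε : 0 < ε) (hεω : ε < ω)
    (hτ : 1 = U₁ * ∫ ξ in ε..ω, (1 / ξ) * Real.tanh (ξ / (2 * τ₁)))
    (T : ℝ) (hT : 0 < T) (hTτ : T < τ₁) :
    (∃! Y : ℝ, 0 ≤ Y ∧
      1 = U₁ * ∫ ξ in ε..ω,
        (1 / Real.sqrt (ξ ^ 2 + Y)) * Real.tanh (Real.sqrt (ξ ^ 2 + Y) / (2 * T))) ∧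
    (∀ Y : ℝ, 0 ≤ Y →
      (1 = U₁ * ∫ ξ in ε..ω,
        (1 / Real.sqrt (ξ ^ 2 + Y)) * Real.tanh (Real.sqrt (ξ ^ 2 + Y) / (2 * T))) →
      0 < Y) := by
  set H : ℝ → ℝ := fun Y => ∫ ξ in ε..ω, gapKernel T √(ξ ^ 2 + Y)
  have hker : ContinuousOn (gapKernel T) (Ici ε) :=
    continuousOn_gapKernel.mono (Ici_subset_Ioi.2 hε)
  have hcont : ContinuousOn H (Ici 0) := continuousOn_integral_comp_sqrt_sq_add hε.le hεω.le hker
  have hanti : StrictAntiOn H (Ici 0) := strictAntiOn_integral_comp_sqrt_sq_add hε.le hεω hker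
    ((strictAntiOn_gapKernel hT).mono (Ici_subset_Ioi.2 hε))
  have hH0 : 1 < U₁ * H 0 := by
    have hH0_eq : H 0 = ∫ ξ in ε..ω, gapKernel T ξ := integral_congr fun ξ hξ => by
      rw [uIcc_of_le hεω.le] at hξ
      simp only [add_zero, sqrt_sq (hε.le.trans hξ.1)]
    rw [hτ, hH0_eq]
    exact mul_lt_mul_of_pos_left (integral_gapKernel_lt_integral_gapKernel hε hεω hT hTτ) hU
  set c := U₁ * (ω - ε) + 1
  have hc : 0 < c := by nlinarith
  have hHc : U₁ * H (c ^ 2) < 1 := by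
    calc U₁ * H (c ^ 2) ≤ U₁ * ((ω - ε) / c) :=
          mul_le_mul_of_nonneg_left (integral_gapKernel_sqrt_sq_add_sq_le hε hεω.le hc) hU.le
      _ < 1 := by rw [← mul_div_assoc, div_lt_one hc]; linarith
  obtain ⟨Y, hY, hYH⟩ := intermediate_value_Ioo' (sq_nonneg c)
    ((hcont.mono Icc_subset_Ici_self).const_smul U₁) ⟨hHc, hH0⟩
  refine ⟨⟨Y, ⟨hY.1.le, hYH.symm⟩, fun Y' ⟨hY', hY'H⟩ => hanti.injOn hY' hY.1.le ?_⟩, ?_⟩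
  · exact mul_left_cancel₀ hU.ne' (hY'H.symm.trans hYH.symm)
  · rintro Y hY hYH
    exact hY.lt_of_ne (by rintro rfl; exact hH0.ne hYH)

/-- For each T with 0 < T < τ₁, there exists a unique Y ≥ 0 such that
1 = U₁ ∫_ε^{ħω_D} (1/√(ξ² + Y)) tanh(√(ξ² + Y)/(2T)) dξ; moreover Y > 0. -/
theorem stmt5 (U₁ ε ω τ₁ : ℝ) (hU : 0 < U₁) (hε : 0 < ε) (hεω : ε < ω)
    (hτ₁ : 0 < τ₁)
    (hτ : 1 = U₁ * ∫ ξ in ε..ω, (1 / ξ) * Real.tanh (ξ / (2 * τ₁)))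
    (T : ℝ) (hT : 0 < T) (hTτ : T < τ₁) :
    (∃! Y : ℝ, 0 ≤ Y ∧
      1 = U₁ * ∫ ξ in ε..ω,
        (1 / Real.sqrt (ξ ^ 2 + Y)) * Real.tanh (Real.sqrt (ξ ^ 2 + Y) / (2 * T))) ∧
    (∀ Y : ℝ, 0 ≤ Y →
      (1 = U₁ * ∫ ξ in ε..ω,
        (1 / Real.sqrt (ξ ^ 2 + Y)) * Real.tanh (Real.sqrt (ξ ^ 2 + Y) / (2 * T))) →
      0 < Y) :=
  stmt5_general U₁ ε ω τ₁ hU hε hεω hτ T hT hTτ
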